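/- arXiv:cs/0510011 — 4 statements merged into one kernel-verified Lean document; each statement's English description precedes it below -/
import Mathlib

section
/- There do not exist four positive integers x, y, z, t such that x² + y² = z² and x·y = 2·t². In other words, no right triangle with integer sides has a square as its area (Diophantus' 20th problem). -/
/-!
Fermat's descent. Dividing out `gcd x y` we may assume the triangle primitive with `x` odd, so
`x = m² - n²`, `y = 2mn`, `z = m² + n²` with `m, n` coprime of opposite parity. Its area
`mn(m + n)(m - n)` is a product of four pairwise coprime positive factors, hence
`m = p²`, `n = q²`, `m + n = r²`, `m - n = s²`. Then `((r + s)/2, (r - s)/2, p)` is again a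
right triangle with square area, and its hypotenuse `p ≤ m < z` is smaller.
-/

section

variable {R : Type*} [CommRing R]

theorem isSquare_of_isSquare_sq_mul [IsDomain R] [IsIntegrallyClosed R] {a k : R} (ha : a ≠ 0)
    (h : IsSquare (a ^ 2 * k)) : IsSquare k := by
  obtain ⟨r, hr⟩ := h
  obtain ⟨c, rfl⟩ : a ∣ r :=
    (IsIntegrallyClosed.pow_dvd_pow_iff two_ne_zero).mp ⟨k, by rw [hr, sq]⟩
  exact ⟨c, mul_left_cancel₀ (pow_ne_zero 2 ha) (by rw [hr]; ring)⟩

theorem IsCoprime.mul_mul_add_mul_sub {m n : R} (h : IsCoprime m n) :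
    IsCoprime (m * n) ((m + n) * (m - n)) := by
  have hm : IsCoprime m (m + n) := by simpa [add_comm] using h.add_mul_left_right 1
  have hn : IsCoprime n (m + n) := by simpa using h.symm.add_mul_left_right 1
  have hm' : IsCoprime m (m - n) := by
    simpa [sub_eq_neg_add] using h.neg_right.add_mul_left_right 1
  have hn' : IsCoprime n (m - n) := by
    simpa [sub_eq_add_neg] using h.symm.add_mul_left_right (-1)
  exact (hm.mul_right hm').mul_left (hn.mul_right hn')

theorem IsCoprime.add_sub {m n : R} (h : IsCoprime m n) (h2 : IsCoprime (m + n) 2) :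
    IsCoprime (m + n) (m - n) := by
  have hn : IsCoprime (m + n) n := by simpa using (h.symm.add_mul_left_right 1).symm
  convert (h2.mul_right hn).neg_right.add_mul_left_right 1 using 1
  ring

theorem IsSquare.exists_nonneg {R : Type*} [Ring R] [LinearOrder R] [IsStrictOrderedRing R]
    {a : R} (h : IsSquare a) : ∃ r, 0 ≤ r ∧ a = r * r := by
  obtain ⟨r, rfl⟩ := h
  exact ⟨|r|, abs_nonneg r, (abs_mul_abs_self r).symm⟩

theorem Int.isSquare_of_isCoprime {a b : ℤ} (hab : IsCoprime a b) (ha : 0 ≤ a)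
    (h : IsSquare (a * b)) : IsSquare a := by
  obtain ⟨r, hr⟩ := h
  obtain ⟨c, rfl | rfl⟩ := Int.sq_of_isCoprime hab (by rw [hr, sq])
  · exact ⟨c, sq c⟩
  · have : c ^ 2 = 0 := by linarith [sq_nonneg c]
    exact ⟨0, by simp [this]⟩

end

/-- The area `xy/2` being a square is recorded as `2xy` being a square: unlike `xy = 2t²`, this
form survives division of the sides by a common factor without parity arguments. -/
structure IsSquareAreaTriangle (x y z : ℤ) : Prop where
  x_pos : 0 < x
  y_pos : 0 < y
  z_pos : 0 < z
  pythagoreanTriple : PythagoreanTriple x y z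
  isSquare_two_mul_mul : IsSquare (2 * x * y)

/-- The legs are `(r + s)/2` and `(r - s)/2`. -/
theorem exists_isSquareAreaTriangle_of_add_of_sub {p q r s : ℤ} (hp : 0 < p) (hq : q ≠ 0)
    (hr : 0 ≤ r) (hs : 0 ≤ s) (hr_odd : Odd r) (hadd : p * p + q * q = r * r)
    (hsub : p * p - q * q = s * s) : ∃ u v, IsSquareAreaTriangle u v p := by
  have hs_odd : Odd s := by
    have : Odd (s * s) := by
      rw [show s * s = r * r - 2 * (q * q) by linarith]
      exact (hr_odd.mul hr_odd).sub_even (even_two_mul _)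
    exact (Int.odd_mul.mp this).1
  obtain ⟨u, hu⟩ := hr_odd.add_odd hs_odd
  have hsr : s < r := by nlinarith [mul_self_pos.mpr hq]
  obtain rfl : s = u + u - r := by omega
  refine ⟨u, r - u, ⟨by omega, by omega, hp, ?_, q, ?_⟩⟩
  · exact mul_left_cancel₀ two_ne_zero (by linear_combination -hadd - hsub :
      2 * (u * u + (r - u) * (r - u)) = 2 * (p * p))
  · exact mul_left_cancel₀ two_ne_zero (by linear_combination hsub - hadd :
      2 * (2 * u * (r - u)) = 2 * (q * q))

namespace IsSquareAreaTriangle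

variable {x y z : ℤ}

theorem symm (h : IsSquareAreaTriangle x y z) : IsSquareAreaTriangle y x z where
  x_pos := h.y_pos
  y_pos := h.x_pos
  z_pos := h.z_pos
  pythagoreanTriple := h.pythagoreanTriple.symm
  isSquare_two_mul_mul := by simpa only [mul_right_comm] using h.isSquare_two_mul_mul

theorem of_mul {g : ℤ} (h : IsSquareAreaTriangle (x * g) (y * g) (z * g)) (hg : 0 < g) :
    IsSquareAreaTriangle x y z where
  x_pos := pos_of_mul_pos_left h.x_pos hg.le
  y_pos := pos_of_mul_pos_left h.y_pos hg.le
  z_pos := pos_of_mul_pos_left h.z_pos hg.le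
  pythagoreanTriple := (PythagoreanTriple.mul_iff g hg.ne').mp (by
    simpa only [mul_comm g] using h.pythagoreanTriple)
  isSquare_two_mul_mul := isSquare_of_isSquare_sq_mul hg.ne' (by
    rw [show g ^ 2 * (2 * x * y) = 2 * (x * g) * (y * g) by ring]
    exact h.isSquare_two_mul_mul)

theorem exists_lt_of_gcd_eq_one_of_odd (h : IsSquareAreaTriangle x y z) (hxy : x.gcd y = 1)
    (hx : x % 2 = 1) : ∃ x' y' z', IsSquareAreaTriangle x' y' z' ∧ z' < z := by
  obtain ⟨m, n, rfl, rfl, rfl, hmn, hparity, hm0⟩ :=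
    h.pythagoreanTriple.coprime_classification' hxy hx h.z_pos
  have hx_pos := h.x_pos
  have hy_pos := h.y_pos
  have hm : 0 < m := by nlinarith
  have hn : 0 < n := by nlinarith
  have hnm : n < m := by nlinarith
  have hcop : IsCoprime m n := Int.isCoprime_iff_gcd_eq_one.mpr hmn
  have hodd : Odd (m + n) := Int.odd_iff.mpr (by omega)
  have harea : IsSquare (m * n * ((m + n) * (m - n))) :=
    isSquare_of_isSquare_sq_mul two_ne_zero (by
      rw [show 2 ^ 2 * (m * n * ((m + n) * (m - n))) = 2 * (m ^ 2 - n ^ 2) * (2 * m * n) by ring]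
      exact h.isSquare_two_mul_mul)
  have hcop_area := hcop.mul_mul_add_mul_sub
  have hmn_sq := Int.isSquare_of_isCoprime hcop_area (by positivity) harea
  have hsq_sub_sq := Int.isSquare_of_isCoprime hcop_area.symm (by nlinarith) (by rwa [mul_comm])
  have hadd_sub := hcop.add_sub (Int.isCoprime_two_right.mpr hodd)
  obtain ⟨p, hp, rfl⟩ := (Int.isSquare_of_isCoprime hcop hm.le hmn_sq).exists_nonneg
  obtain ⟨q, -, rfl⟩ := (Int.isSquare_of_isCoprime hcop.symm hn.le
    (by rwa [mul_comm])).exists_nonneg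
  obtain ⟨r, hr, hr_sq⟩ :=
    (Int.isSquare_of_isCoprime hadd_sub (by omega) hsq_sub_sq).exists_nonneg
  obtain ⟨s, hs, hs_sq⟩ := (Int.isSquare_of_isCoprime hadd_sub.symm (by omega)
    (by rwa [mul_comm])).exists_nonneg
  have hp : 0 < p := hp.lt_of_ne (by rintro rfl; simp at hm)
  obtain ⟨u, v, huv⟩ := exists_isSquareAreaTriangle_of_add_of_sub hp
    (by rintro rfl; simp at hn) hr hs (Int.odd_mul.mp (hr_sq ▸ hodd)).1 hr_sq hs_sq
  exact ⟨u, v, p, huv, by nlinarith⟩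

theorem exists_lt (h : IsSquareAreaTriangle x y z) :
    ∃ x' y' z', IsSquareAreaTriangle x' y' z' ∧ z' < z := by
  rcases eq_or_ne (x.gcd y) 1 with hxy | hxy
  · have hodd : x % 2 = 1 ∨ y % 2 = 1 := by
      by_contra! heven
      have h2 : (2 : ℤ) ∣ x.gcd y :=
        Int.dvd_coe_gcd (Int.dvd_of_emod_eq_zero (show x % 2 = 0 by omega))
          (Int.dvd_of_emod_eq_zero (show y % 2 = 0 by omega))
      rw [hxy] at h2
      norm_num at h2
    rcases hodd with hx | hy
    · exact h.exists_lt_of_gcd_eq_one_of_odd hxy hx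
    · exact h.symm.exists_lt_of_gcd_eq_one_of_odd (by rwa [Int.gcd_comm]) hy
  · have hg := Int.gcd_pos_of_ne_zero_left y h.x_pos.ne'
    obtain ⟨a, b, -, hxa, hyb⟩ := Int.exists_gcd_one hg
    obtain ⟨c, hzc⟩ := h.pythagoreanTriple.gcd_dvd
    generalize x.gcd y = g at *
    subst hxa hyb hzc
    rw [mul_comm (g : ℤ) c] at h
    have hc : IsSquareAreaTriangle a b c := h.of_mul (by exact_mod_cast hg)
    have hg2 : (2 : ℤ) ≤ g := by omega
    exact ⟨a, b, c, hc, by nlinarith [hc.z_pos]⟩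

end IsSquareAreaTriangle

theorem not_isSquareAreaTriangle (x y z : ℤ) : ¬IsSquareAreaTriangle x y z := by
  induction hN : z.toNat using Nat.strong_induction_on generalizing x y z with
  | _ N ih =>
    intro h
    obtain ⟨x', y', z', h', hlt⟩ := h.exists_lt
    exact ih z'.toNat (by have := h'.z_pos; omega) x' y' z' rfl h'

/-- Diophantus' 20th problem: no right triangle with integer sides has a
square as its area. -/
theorem diophantus20 :
    ¬ ∃ x y z t : ℤ, 0 < x ∧ 0 < y ∧ 0 < z ∧ 0 < t ∧
      x * x + y * y = z * z ∧ x * y = 2 * (t * t) := by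
  rintro ⟨x, y, z, t, hx, hy, hz, -, hxyz, hxy⟩
  exact not_isSquareAreaTriangle x y z
    ⟨hx, hy, hz, hxyz, 2 * t, by rw [mul_assoc, hxy]; ring⟩
end

section
/- If p and q are integers with 0 < p ≤ q, p and q relatively prime, and p and q of distinct parities, then p·q·(q² − p²) is not a square. -/
/-- Two integers have distinct parities if one is even and the other odd. -/
def DistinctParity (a b : ℤ) : Prop := (Even a ∧ Odd b) ∨ (Odd a ∧ Even b)

/-- An integer is a square if it is `i * i` for some nonnegative integer `i`. -/
def IsSqr (n : ℤ) : Prop := ∃ i : ℤ, 0 ≤ i ∧ i * i = n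

/-!
Fermat's descent. If `pq(q² - p²)` is a square, its four pairwise coprime factors
`p, q, q - p, q + p` are squares `a², b², c², d²`. With `c, d` odd, `u = (d + c)/2` and
`v = (d - c)/2` satisfy `u² + v² = b²` and `2uv = a²`, so `(u, v, b)` is a primitive Pythagorean
triple whose parameters `n < m` again form such a pair, with `m < b ≤ q`.
-/

section CommRing

variable {R : Type*} [CommRing R] {p q u v : R}

theorem IsCoprime.sub_add_of_isCoprime_two (h : IsCoprime p q) (h2 : IsCoprime (q - p) 2) :
    IsCoprime (q - p) (q + p) := by
  have hp : IsCoprime (q - p * 1) p := IsCoprime.sub_mul_left_left_iff.2 h.symm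
  have h2p : IsCoprime (q - p) (2 * p + (q - p) * 1) :=
    (h2.mul_right (by rwa [mul_one] at hp)).add_mul_left_right 1
  convert h2p using 1
  ring

theorem IsCoprime.of_sub_add (h : IsCoprime (u - v) (u + v)) : IsCoprime u v := by
  obtain ⟨s, t, hst⟩ := h
  exact ⟨s + t, t - s, by linear_combination hst⟩

end CommRing

theorem Int.exists_sq_of_isCoprime_of_pos {a b c : ℤ} (hab : IsCoprime a b) (ha : 0 < a)
    (h : a * b = c ^ 2) : ∃ x, 0 < x ∧ a = x ^ 2 := by
  obtain ⟨x, hx | hx⟩ := Int.sq_of_isCoprime hab h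
  · refine ⟨|x|, abs_pos.2 ?_, by rw [hx, sq_abs]⟩
    rintro rfl
    simp_all
  · nlinarith [sq_nonneg x]

theorem Int.exists_sq_and_sq_of_isCoprime_of_pos {a b c : ℤ} (hab : IsCoprime a b) (ha : 0 < a)
    (hb : 0 < b) (h : a * b = c ^ 2) : (∃ x, 0 < x ∧ a = x ^ 2) ∧ ∃ y, 0 < y ∧ b = y ^ 2 :=
  ⟨Int.exists_sq_of_isCoprime_of_pos hab ha h,
    Int.exists_sq_of_isCoprime_of_pos hab.symm hb (by rw [mul_comm, h])⟩

theorem DistinctParity.odd_sub {p q : ℤ} (h : DistinctParity p q) : Odd (q - p) := by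
  rcases h with ⟨hp, hq⟩ | ⟨hp, hq⟩
  · exact hq.sub_even hp
  · exact hq.sub_odd hp

theorem DistinctParity.odd_add {p q : ℤ} (h : DistinctParity p q) : Odd (q + p) := by
  rcases h with ⟨hp, hq⟩ | ⟨hp, hq⟩
  · exact hq.add_even hp
  · exact hq.add_odd hp

/-- `(p, q)` generates the Pythagorean triangle with legs `2pq` and `q² - p²`, whose area
`pq(q² - p²)` is a square. -/
structure HasSquareArea (p q : ℤ) : Prop where
  pos : 0 < p
  lt : p < q
  isCoprime : IsCoprime p q
  distinctParity : DistinctParity p q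
  isSqr : IsSqr (p * q * (q ^ 2 - p ^ 2))

namespace HasSquareArea

variable {p q : ℤ}

theorem isCoprime_sub_add (h : HasSquareArea p q) : IsCoprime (q - p) (q + p) :=
  h.isCoprime.sub_add_of_isCoprime_two (Int.isCoprime_two_right.2 h.distinctParity.odd_sub)

theorem exists_lt_of_pythagoreanTriple {x y z s : ℤ} (h : PythagoreanTriple x y z)
    (hcop : IsCoprime x y) (hx_odd : Odd x) (hx : 0 < x) (hy : 0 < y) (hz : 0 < z)
    (harea : x * y = 2 * s ^ 2) :
    ∃ n m, HasSquareArea n m ∧ m < z := by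
  obtain ⟨m, n, rfl, rfl, rfl, hmn, hpar, hm⟩ := h.coprime_classification'
    (Int.isCoprime_iff_gcd_eq_one.1 hcop) (Int.odd_iff.1 hx_odd) hz
  have hn : 0 < n := by nlinarith
  have hnm : n < m := by nlinarith
  refine ⟨n, m, ⟨hn, hnm, ?_, ?_, |s|, abs_nonneg s, ?_⟩, by nlinarith⟩
  · rwa [Int.isCoprime_iff_gcd_eq_one, Int.gcd_comm]
  · rcases hpar with ⟨hm_even, hn_odd⟩ | ⟨hm_odd, hn_even⟩
    · exact .inr ⟨Int.odd_iff.2 hn_odd, Int.even_iff.2 hm_even⟩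
    · exact .inl ⟨Int.even_iff.2 hn_even, Int.odd_iff.2 hm_odd⟩
  · rw [abs_mul_abs_self]
    linarith

theorem exists_sq (h : HasSquareArea p q) :
    ∃ a b c d : ℤ, 0 < a ∧ 0 < b ∧ 0 < c ∧ 0 < d ∧
      p = a ^ 2 ∧ q = b ^ 2 ∧ q - p = c ^ 2 ∧ q + p = d ^ 2 := by
  have hsub_add := h.isCoprime_sub_add
  obtain ⟨hp, hpq, hcop, -, r, -, hr⟩ := h
  have hq : 0 < q := hp.trans hpq
  have hsub : 0 < q - p := by linarith
  have hp_rest : IsCoprime p (q * ((q - p) * (q + p))) := by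
    have : IsCoprime p (q ^ 2 - p * p) := IsCoprime.sub_mul_left_right_iff.2 hcop.pow_right
    exact hcop.mul_right (by convert this using 1; ring)
  have hq_rest : IsCoprime q ((q - p) * (q + p)) := by
    have : IsCoprime q (q * q - p ^ 2) := IsCoprime.mul_sub_left_right_iff.2 hcop.symm.pow_right
    convert this using 1
    ring
  obtain ⟨⟨a, ha, hpa⟩, s, -, hs⟩ := Int.exists_sq_and_sq_of_isCoprime_of_pos hp_rest hp
    (by positivity) (by rw [sq_abs, sq, hr]; ring)
  obtain ⟨⟨b, hb, hqb⟩, t, -, ht⟩ := Int.exists_sq_and_sq_of_isCoprime_of_pos hq_rest hq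
    (by positivity) hs
  obtain ⟨⟨c, hc, hqc⟩, d, hd, hqd⟩ := Int.exists_sq_and_sq_of_isCoprime_of_pos hsub_add hsub
    (by positivity) ht
  exact ⟨a, b, c, d, ha, hb, hc, hd, hpa, hqb, hqc, hqd⟩

theorem exists_pythagoreanTriple (h : HasSquareArea p q) :
    ∃ u v b s : ℤ, PythagoreanTriple u v b ∧ IsCoprime u v ∧ 0 < u ∧ 0 < v ∧ 0 < b ∧
      u * v = 2 * s ^ 2 ∧ b < q := by
  obtain ⟨a, b, c, d, ha, hb, hc, hd, hpa, hqb, hqc, hqd⟩ := h.exists_sq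
  have hc_odd : Odd c := (Int.odd_pow' two_ne_zero).1 (hqc ▸ h.distinctParity.odd_sub)
  have hd_odd : Odd d := (Int.odd_pow' two_ne_zero).1 (hqd ▸ h.distinctParity.odd_add)
  have hcd : c < d := by nlinarith [h.pos]
  obtain ⟨u, v, rfl, rfl⟩ : ∃ u v, d = u + v ∧ c = u - v := by
    obtain ⟨k, rfl⟩ := hd_odd
    obtain ⟨l, rfl⟩ := hc_odd
    exact ⟨k + l + 1, k - l, by ring, by ring⟩
  have htriple : PythagoreanTriple u v b := by
    have : 2 * (u * u + v * v) = 2 * (b * b) := by linear_combination 2 * hqb - hqc - hqd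
    exact mul_left_cancel₀ two_ne_zero this
  have hauv : a ^ 2 = 2 * (u * v) := by
    have : 2 * a ^ 2 = 2 * (2 * (u * v)) := by linear_combination hqd - hqc - 2 * hpa
    exact mul_left_cancel₀ two_ne_zero this
  obtain ⟨s, rfl⟩ : Even a := (Int.even_pow' two_ne_zero).1 ⟨_, hauv.trans (two_mul _)⟩
  have hcop : IsCoprime u v := by
    have := h.isCoprime_sub_add
    rw [hqc, hqd, IsCoprime.pow_iff two_pos two_pos] at this
    exact this.of_sub_add
  refine ⟨u, v, b, s, htriple, hcop, by linarith, by linarith, hb, by linarith, ?_⟩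
  nlinarith [h.pos, h.lt]

theorem exists_lt (h : HasSquareArea p q) : ∃ p' q', HasSquareArea p' q' ∧ q' < q := by
  obtain ⟨u, v, b, s, htriple, hcop, hu, hv, hb, hs, hbq⟩ := h.exists_pythagoreanTriple
  suffices ∃ p' q', HasSquareArea p' q' ∧ q' < b from
    this.imp fun _ ⟨q', h', hq'⟩ => ⟨q', h', hq'.trans hbq⟩
  rcases Int.even_or_odd u with hu_even | hu_odd
  · have hv_odd : Odd v := Int.not_even_iff_odd.1 fun hv_even => by
      simpa [Int.isUnit_iff] using hcop.isUnit_of_dvd' hu_even.two_dvd hv_even.two_dvd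
    exact exists_lt_of_pythagoreanTriple htriple.symm hcop.symm hv_odd hv hu hb
      (by rw [mul_comm, hs])
  · exact exists_lt_of_pythagoreanTriple htriple hcop hu_odd hu hv hb hs

theorem not_hasSquareArea (p q : ℤ) : ¬ HasSquareArea p q := by
  intro h
  obtain ⟨p', q', h', hq'⟩ := h.exists_lt
  exact not_hasSquareArea p' q' h'
termination_by q.toNat
decreasing_by have := h'.pos.trans h'.lt; omega

end HasSquareArea

/-- Refined form of Diophantus' 20th problem. -/
theorem diophantus20_refined (p q : ℤ) (hp : 0 < p) (hpq : p ≤ q)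
    (hcop : IsCoprime p q) (hpar : DistinctParity p q) :
    ¬ IsSqr (p * q * (q ^ 2 - p ^ 2)) := by
  rcases hpq.lt_or_eq with hlt | rfl
  · exact fun h => HasSquareArea.not_hasSquareArea p q ⟨hp, hlt, hcop, hpar, h⟩
  · rcases hpar with ⟨he, ho⟩ | ⟨ho, he⟩ <;> exact absurd he (Int.not_even_iff_odd.2 ho)
end

section
/- If y and z are integers with 0 < y ≤ z, y and z relatively prime, and y and z of distinct parities, then (z² + y²)·(z² − y²) is not a square. -/
lemma aux_even_odd (x y z : ℤ) (hx : Even x) (hy : Odd y) : x ^ 4 - y ^ 4 ≠ z ^ 2 := by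
  obtain ⟨k, rfl⟩ := hx
  obtain ⟨j, rfl⟩ := hy
  intro heq
  have h := congrArg (fun t : ℤ => (t : ZMod 4)) heq
  push_cast at h
  revert h
  generalize ((k : ZMod 4)) = a
  generalize ((j : ZMod 4)) = b
  generalize ((z : ZMod 4)) = c
  revert a b c
  decide

lemma sq_of_coprime_pos {a b c : ℤ} (h : IsCoprime a b) (hab : a * b = c ^ 2) (ha : 0 < a) :
    ∃ r : ℤ, 0 ≤ r ∧ a = r ^ 2 := by
  obtain ⟨a0, h0 | h0⟩ := Int.sq_of_isCoprime h hab
  · exact ⟨|a0|, abs_nonneg _, by rw [h0, sq_abs]⟩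
  · nlinarith [sq_nonneg a0]

lemma descent_final {p q r x yh : ℤ} (hr : r = p ^ 2 - q ^ 2) (hx : x = p ^ 2 + q ^ 2)
    (hpq : Int.gcd p q = 1) (hp0 : 0 ≤ p) (hrpos : 0 < r) (hpqpos : 0 < p * q)
    (hw2 : p * q * r = yh ^ 2) :
    ∃ α β γ : ℤ, 0 < β ∧ β < α ∧ IsCoprime α β ∧ α ^ 4 - β ^ 4 = γ ^ 2 ∧
      α.natAbs < x.natAbs := by
  have cpq : IsCoprime p q := Int.isCoprime_iff_gcd_eq_one.mpr hpq
  have hppos : 0 < p := by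
    rcases hp0.lt_or_eq with h | h
    · exact h
    · exfalso; rw [← h] at hpqpos; simp at hpqpos
  have hqpos : 0 < q := by nlinarith
  have hqp : q < p := by nlinarith
  have cpr : IsCoprime r p := by
    have h1 : IsCoprime (-(q ^ 2) + p * p) p :=
      (((cpq.symm.pow_left : IsCoprime (q ^ 2) p)).neg_left).add_mul_right_left p
    have : r = -(q ^ 2) + p * p := by linear_combination hr
    rwa [← this] at h1
  have cqr : IsCoprime r q := by
    have h1 : IsCoprime (p ^ 2 + -q * q) q := ((cpq.pow_left : IsCoprime (p ^ 2) q)).add_mul_right_left (-q)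
    have : r = p ^ 2 + -q * q := by linear_combination hr
    rwa [← this] at h1
  obtain ⟨α, hα0, hαp⟩ := sq_of_coprime_pos (cpq.mul_right cpr.symm)
    (show p * (q * r) = yh ^ 2 by linear_combination hw2) hppos
  obtain ⟨β, hβ0, hβq⟩ := sq_of_coprime_pos (cpq.symm.mul_right cqr.symm)
    (show q * (p * r) = yh ^ 2 by linear_combination hw2) hqpos
  obtain ⟨γ, hγ0, hγr⟩ := sq_of_coprime_pos (cpr.mul_right cqr)
    (show r * (p * q) = yh ^ 2 by linear_combination hw2) hrpos
  refine ⟨α, β, γ, ?_, ?_, ?_, ?_, ?_⟩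
  · rcases hβ0.lt_or_eq with h | h
    · exact h
    · exfalso; rw [← h] at hβq; simp at hβq; omega
  · have h2 : β ^ 2 < α ^ 2 := by rw [← hαp, ← hβq]; exact hqp
    exact lt_of_pow_lt_pow_left₀ 2 hα0 h2
  · have : IsCoprime (α ^ 2) (β ^ 2) := by rwa [← hαp, ← hβq]
    exact (IsCoprime.pow_left_iff two_pos).mp ((IsCoprime.pow_right_iff two_pos).mp this)
  · rw [hαp, hβq, hγr] at hr
    linear_combination -hr
  · have hax : α < x := by nlinarith [sq_nonneg (α - 1), sq_nonneg (p - 1)]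
    have hx0 : 0 < x := by nlinarith
    omega

lemma fermat_sub (n : ℕ) : ∀ x y z : ℤ, x.natAbs ≤ n → 0 < y → y < x →
    IsCoprime x y → x ^ 4 - y ^ 4 ≠ z ^ 2 := by
  induction n using Nat.strong_induction_on with
  | _ n IH =>
  intro x y z hxn hy0 hyx hcop heq
  have hx0 : 0 < x := lt_trans hy0 hyx
  have hy4x4 : y ^ 4 < x ^ 4 := by
    have h2 : y ^ 2 < x ^ 2 := by nlinarith
    nlinarith [h2, mul_pos hy0 hy0, mul_pos hx0 hx0]
  rw [← sq_abs z] at heq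
  set w := |z| with hw
  have hw0 : 0 ≤ w := abs_nonneg z
  clear_value w
  clear hw
  have hwpos : 0 < w := by
    rcases hw0.lt_or_eq with h | h
    · exact h
    · exfalso; nlinarith
  rcases Int.even_or_odd x with hxe | hxo
  · rcases Int.even_or_odd y with hye | hyo
    · obtain ⟨a, rfl⟩ := hxe
      obtain ⟨b, rfl⟩ := hye
      have : IsUnit (2 : ℤ) := hcop.isUnit_of_dvd' ⟨a, by ring⟩ ⟨b, by ring⟩
      rw [Int.isUnit_iff] at this
      omega
    · exact aux_even_odd x y w hxe hyo heq
  · rcases Int.even_or_odd y with hye | hyo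
    · -- MAIN CASE: x odd, y even
      obtain ⟨yh, rfl⟩ := hye
      have hy4e : Even ((yh + yh) ^ 4) := ⟨8 * yh ^ 4, by ring⟩
      have hw_odd : Odd w := by
        have h1 : Odd (x ^ 4 - (yh + yh) ^ 4) := (hxo.pow).sub_even hy4e
        rw [heq, Int.odd_pow] at h1
        tauto
      have htrip : PythagoreanTriple w ((yh + yh) ^ 2) (x ^ 2) := by
        unfold PythagoreanTriple; linear_combination -heq
      have hcop2 : Int.gcd w ((yh + yh) ^ 2) = 1 := by
        rw [← Int.isCoprime_iff_gcd_eq_one]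
        have h1 : IsCoprime (x ^ 4) ((yh + yh) ^ 2) := hcop.pow
        have h2 : IsCoprime (x ^ 4 + -((yh + yh) ^ 2) * (yh + yh) ^ 2) ((yh + yh) ^ 2) :=
          h1.add_mul_right_left _
        have h3 : IsCoprime (w ^ 2) ((yh + yh) ^ 2) := by
          have hww : w ^ 2 = x ^ 4 + -((yh + yh) ^ 2) * (yh + yh) ^ 2 := by
            linear_combination -heq
          rwa [← hww] at h2
        exact (IsCoprime.pow_left_iff two_pos).mp h3
      obtain ⟨m, n', hw_eq, hy2, hx2, hmn, hpar, hm0⟩ :=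
        htrip.coprime_classification' hcop2 (Int.odd_iff.mp hw_odd) (by positivity)
      have hmn_pos : 0 < m * n' := by
        have hyhpos : 0 < yh := by linarith
        have h4 : 0 < (yh + yh) ^ 2 := by positivity
        have h5 : (yh + yh) ^ 2 = 2 * (m * n') := by linear_combination hy2
        linarith
      have hmpos : 0 < m := by
        rcases hm0.lt_or_eq with h | h
        · exact h
        · exfalso; rw [← h] at hmn_pos; simp at hmn_pos
      have hnpos : 0 < n' := by
        rcases lt_trichotomy n' 0 with h | h | h
        · exfalso; nlinarith
        · exfalso; rw [h, mul_zero] at hmn_pos; simp at hmn_pos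
        · exact h
      have hmn2 : m * n' = 2 * yh ^ 2 := by
        have h5 : 2 * (m * n') = 4 * yh ^ 2 := by linear_combination -hy2
        linarith
      rcases hpar with ⟨hme, hno⟩ | ⟨hmo, hne⟩
      · -- m even, n' odd : triple (n', m, x)
        have htrip2 : PythagoreanTriple n' m x := by
          unfold PythagoreanTriple; linear_combination -hx2
        have hgcd2 : Int.gcd n' m = 1 := by rwa [Int.gcd_comm]
        obtain ⟨p, q, hn'_eq, hm_eq, hxeq, hpq, _, hp0⟩ :=
          htrip2.coprime_classification' hgcd2 hno hx0
        have hpqpos : 0 < p * q := by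
          have h6 : m = 2 * (p * q) := by linear_combination hm_eq
          linarith
        have hw2 : p * q * n' = yh ^ 2 := by
          have h7 : 2 * (p * q * n') = 2 * yh ^ 2 := by
            linear_combination hmn2 - n' * hm_eq
          linarith
        obtain ⟨α, β, γ, hb, hba, hc, he, hlt⟩ :=
          descent_final hn'_eq hxeq hpq hp0 hnpos hpqpos hw2
        exact IH α.natAbs (lt_of_lt_of_le hlt hxn) α β γ le_rfl hb hba hc he
      · -- m odd, n' even : triple (m, n', x)
        have htrip2 : PythagoreanTriple m n' x := by
          unfold PythagoreanTriple; linear_combination -hx2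
        obtain ⟨p, q, hm_eq, hn'_eq, hxeq, hpq, _, hp0⟩ :=
          htrip2.coprime_classification' hmn hmo hx0
        have hpqpos : 0 < p * q := by
          have h6 : n' = 2 * (p * q) := by linear_combination hn'_eq
          linarith
        have hw2 : p * q * m = yh ^ 2 := by
          have h7 : 2 * (p * q * m) = 2 * yh ^ 2 := by
            linear_combination hmn2 - m * hn'_eq
          linarith
        obtain ⟨α, β, γ, hb, hba, hc, he, hlt⟩ :=
          descent_final hm_eq hxeq hpq hp0 hmpos hpqpos hw2
        exact IH α.natAbs (lt_of_lt_of_le hlt hxn) α β γ le_rfl hb hba hc he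
    · -- both odd
      have hze : Even w := by
        have h1 : Even (x ^ 4 - y ^ 4) := (hxo.pow).sub_odd (hyo.pow)
        rw [heq, Int.even_pow] at h1
        tauto
      obtain ⟨c, rfl⟩ := hze
      have hsum : Even (x ^ 2 + y ^ 2) := (hxo.pow).add_odd (hyo.pow)
      obtain ⟨u, hu⟩ := hsum
      have hdiff : Even (x ^ 2 - y ^ 2) := (hxo.pow).sub_odd (hyo.pow)
      obtain ⟨v, hv⟩ := hdiff
      have h1 : u + v = x ^ 2 := by linarith
      have h2 : u - v = y ^ 2 := by linarith
      have hcw : u * v = c ^ 2 := by nlinarith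
      have hcopuv : IsCoprime u v := by
        obtain ⟨s, t, hst⟩ := (hcop.pow : IsCoprime (x ^ 2) (y ^ 2))
        exact ⟨s + t, s - t, by linear_combination s * h1 + t * h2 + hst⟩
      have hupos : 0 < u := by nlinarith
      have hvpos : 0 < v := by nlinarith
      obtain ⟨α, hα0, hαu⟩ := sq_of_coprime_pos hcopuv hcw hupos
      obtain ⟨β, hβ0, hβv⟩ := sq_of_coprime_pos hcopuv.symm (show v * u = c ^ 2 by linear_combination hcw) hvpos
      have key : u ^ 2 - v ^ 2 = (x * y) ^ 2 := by linear_combination (u - v) * h1 + x ^ 2 * h2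
      have hnew : α ^ 4 - β ^ 4 = (x * y) ^ 2 := by
        linear_combination (-(u + α ^ 2)) * hαu + (v + β ^ 2) * hβv + key
      have hvu : v < u := by nlinarith
      have hβα : β < α := by
        have h2' : β ^ 2 < α ^ 2 := by rw [← hαu, ← hβv]; exact hvu
        exact lt_of_pow_lt_pow_left₀ 2 hα0 h2'
      have hβpos : 0 < β := by
        rcases hβ0.lt_or_eq with h | h
        · exact h
        · exfalso; rw [← h] at hβv; simp at hβv; linarith
      have hcopαβ : IsCoprime α β := by
        have : IsCoprime (α ^ 2) (β ^ 2) := by rwa [← hαu, ← hβv]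
        exact (IsCoprime.pow_left_iff two_pos).mp ((IsCoprime.pow_right_iff two_pos).mp this)
      have hαx : α.natAbs < x.natAbs := by
        have hy2x2 : y ^ 2 < x ^ 2 := by nlinarith
        have hux : u < x ^ 2 := by linarith
        have hα2 : α ^ 2 < x ^ 2 := by rw [← hαu]; exact hux
        have : α < x := lt_of_pow_lt_pow_left₀ 2 hx0.le hα2
        omega
      exact IH α.natAbs (lt_of_lt_of_le hαx hxn) α β (x * y) le_rfl hβpos hβα hcopαβ hnew

/-- Equivalent form of Diophantus' 20th problem used for Fermat's last theorem
for exponent 4. -/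
theorem diophantus20_equiv (y z : ℤ) (hy : 0 < y) (hyz : y ≤ z)
    (hcop : IsCoprime y z) (hpar : DistinctParity y z) :
    ¬ IsSqr ((z ^ 2 + y ^ 2) * (z ^ 2 - y ^ 2)) := by
  rintro ⟨i, hi0, hi⟩
  have hne : y ≠ z := by
    rintro rfl
    rcases hpar with ⟨⟨a, ha⟩, ⟨b, hb⟩⟩ | ⟨⟨a, ha⟩, ⟨b, hb⟩⟩ <;> omega
  have hyz' : y < z := lt_of_le_of_ne hyz hne
  exact fermat_sub z.natAbs z y i le_rfl hy hyz' hcop.symm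
    (by linear_combination -hi)
end

section
/- If p and q are integers with 0 ≤ p ≤ q, q > 0, p and q relatively prime, and p and q both odd, then setting p' = (q − p)/2 and q' = (p + q)/2, the integers p' and q' satisfy: 0 ≤ p' ≤ q', q' > 0, p' and q' are relatively prime, p' and q' have distinct parities, and (q² − p²)/(p² + q²) = 2p'q'/(p'² + q'²) and 2pq/(p² + q²) = (q'² − p'²)/(p'² + q'²). -/
/-- If `0 ≤ p ≤ q`, `q > 0`, `p` and `q` are coprime and both odd, then
`p' = (q - p)/2` and `q' = (p + q)/2` satisfy `0 ≤ p' ≤ q'`, `q' > 0`, are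
coprime, of distinct parities, and the corresponding points of the unit circle
coincide (with coordinates swapped). -/
theorem both_odd_reparam (p q p' q' : ℤ) (hp : 0 ≤ p) (hpq : p ≤ q)
    (hq : 0 < q) (hcop : IsCoprime p q) (hop : Odd p) (hoq : Odd q)
    (hp' : 2 * p' = q - p) (hq' : 2 * q' = p + q) :
    0 ≤ p' ∧ p' ≤ q' ∧ 0 < q' ∧ IsCoprime p' q' ∧ DistinctParity p' q' ∧
      ((q : ℝ) ^ 2 - (p : ℝ) ^ 2) / ((p : ℝ) ^ 2 + (q : ℝ) ^ 2) =
        2 * (p' : ℝ) * (q' : ℝ) / ((p' : ℝ) ^ 2 + (q' : ℝ) ^ 2) ∧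
      2 * (p : ℝ) * (q : ℝ) / ((p : ℝ) ^ 2 + (q : ℝ) ^ 2) =
        ((q' : ℝ) ^ 2 - (p' : ℝ) ^ 2) / ((p' : ℝ) ^ 2 + (q' : ℝ) ^ 2) := by
  have hq'pos : 0 < q' := by omega
  have hpeq : p = q' - p' := by omega
  have hqeq : q = p' + q' := by omega
  refine ⟨by omega, by omega, hq'pos, ?_, ?_, ?_, ?_⟩
  · obtain ⟨a, b, hab⟩ := hcop
    exact ⟨b - a, a + b, by rw [hpeq, hqeq] at hab; linarith [hab]⟩
  · obtain ⟨k, hk⟩ := hop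
    obtain ⟨m, hm⟩ := hoq
    rcases Int.even_or_odd p' with he | ho
    · left
      refine ⟨he, ?_⟩
      obtain ⟨r, hr⟩ := he
      exact ⟨m - r, by omega⟩
    · right
      refine ⟨ho, ?_⟩
      obtain ⟨r, hr⟩ := ho
      exact ⟨m - r, by omega⟩
  all_goals {
    have hp'r : (0:ℝ) ≤ (p':ℝ) := by exact_mod_cast (by omega : (0:ℤ) ≤ p')
    have hq'r : (0:ℝ) < (q':ℝ) := by exact_mod_cast hq'pos
    have h1 : (0:ℝ) < ((q':ℝ) - (p':ℝ))^2 + ((p':ℝ) + (q':ℝ))^2 := by nlinarith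
    have h2 : (0:ℝ) < (p':ℝ)^2 + (q':ℝ)^2 := by nlinarith
    have hpr : (p:ℝ) = (q':ℝ) - (p':ℝ) := by exact_mod_cast congrArg (Int.cast : ℤ → ℝ) hpeq
    have hqr : (q:ℝ) = (p':ℝ) + (q':ℝ) := by exact_mod_cast congrArg (Int.cast : ℤ → ℝ) hqeq
    rw [hpr, hqr, div_eq_div_iff h1.ne' h2.ne']
    ring }
end
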